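/- Let 𝒵 be a nonempty finite set, Q a distribution on 𝒵 with Q(z) > 0 for all z, f₁,…,f_k : 𝒵 → ℝ and c₁,…,c_k ∈ ℝ, and let ℳ = { P̃ a distribution on 𝒵 : Σ_z P̃(z)·f_i(z) = c_i for all 1 ≤ i ≤ k } be the corresponding mixture family; assume ℳ contains at least one distribution with full support. Then any minimizer P* of min{ D(P̃‖Q) : P̃ ∈ ℳ } satisfies the Pythagorean identity D(P̃‖Q) = D(P̃‖P*) + D(P*‖Q) for every P̃ ∈ ℳ, and P* belongs to the exponential family generated by Q and f₁,…,f_k: there exist θ₁,…,θ_k ∈ ℝ and ψ ∈ ℝ such that P*(z) = Q(z)·exp(Σ_{i=1}^k θ_i·f_i(z) − ψ) for all z ∈ 𝒵. -/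

import Mathlib

/-! The relative entropy `D(·‖Q)` is convex on the mixture family `ℳ`. Moving from the
minimizer `P*` by `t` towards a full-support point `P₀ ∈ ℳ` changes `D(·‖Q)` by at most
`t (D(P₀‖Q) - D(P*‖Q)) + t log t · A`, where `A` is the mass `P₀` puts on the zeros of `P*`;
if `A > 0` this is negative for small `t`, so `P*` has full support. Then `t ↦ D(P* + t v‖Q)`
is differentiable with a local minimum at `0` for every direction `v` tangent to `ℳ`, so
`log (P*/Q)` is orthogonal to all such `v`. Hence `P̃ ↦ ∑ P̃ log (P*/Q)` is constant on `ℳ`,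
which is the Pythagorean identity, and by linear duality `log (P*/Q)` lies in the span of
`1, f₁, …, f_k`, which is the exponential form. -/

open scoped Classical BigOperators

noncomputable section

variable {Z : Type*} [Fintype Z]

/-- `P` is a probability distribution on the finite set `Z`. -/
def IsDistZ (P : Z → ℝ) : Prop :=
  (∀ z, 0 ≤ P z) ∧ ∑ z : Z, P z = 1

/-- Relative entropy `D(P‖Q)` on `Z` (natural log; `Real.log 0 = 0` gives `0·log 0 = 0`). -/
def relEntZ (P Q : Z → ℝ) : ℝ := ∑ z : Z, P z * Real.log (P z / Q z)

open Real Finset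

lemma mul_log_div_eq_sub {q : ℝ} (hq : q ≠ 0) (x : ℝ) :
    x * log (x / q) = x * log x - x * log q := by
  rcases eq_or_ne x 0 with rfl | hx
  · simp
  · rw [log_div hx hq]; ring

lemma sub_le_mul_log_div {x q : ℝ} (hx : 0 ≤ x) (hq : 0 < q) : x - q ≤ x * log (x / q) := by
  have h := mul_nonneg hq.le (InformationTheory.klFun_nonneg (div_nonneg hx hq.le))
  rw [InformationTheory.klFun, mul_sub, mul_add, ← mul_assoc, mul_div_cancel₀ x hq.ne'] at h
  linarith

lemma convexOn_mul_log_div {q : ℝ} (hq : q ≠ 0) :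
    ConvexOn ℝ (Set.Ici 0) (fun x : ℝ ↦ x * log (x / q)) := by
  have h := convexOn_mul_log.sub ((LinearMap.id.smulRight (log q)).concaveOn (convex_Ici 0))
  refine h.congr fun x _ ↦ ?_
  simp [mul_log_div_eq_sub hq]

lemma mul_mul_log_mul_div (t b : ℝ) {q : ℝ} (hq : q ≠ 0) :
    t * b * log (t * b / q) = t * (b * log (b / q)) + t * log t * b := by
  rcases eq_or_ne t 0 with rfl | ht
  · simp
  rcases eq_or_ne b 0 with rfl | hb
  · simp
  rw [mul_div_assoc, log_mul ht (div_ne_zero hb hq)]; ring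

lemma hasDerivAt_mul_log_div {a q : ℝ} (ha : a ≠ 0) (hq : q ≠ 0) :
    HasDerivAt (fun x ↦ x * log (x / q)) (log (a / q) + 1) a := by
  have h := (hasDerivAt_mul_log ha).sub ((hasDerivAt_id a).mul_const (log q))
  rw [funext (mul_log_div_eq_sub hq), log_div ha hq]
  exact h.congr_deriv (by ring)

lemma mem_span_range_of_forall_dotProduct_eq_zero {ι n K : Type*} [Field K] [Finite ι]
    [Fintype n] {F : ι → n → K} {g : n → K} (h : ∀ v, (∀ i, v ⬝ᵥ F i = 0) → v ⬝ᵥ g = 0) :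
    g ∈ Submodule.span K (Set.range F) := by
  let e := dotProductEquiv K n
  have he : e g ∈ Submodule.span K (Set.range (e ∘ F)) := by
    refine mem_span_of_iInf_ker_le_ker fun v hv ↦ ?_
    simp only [Submodule.mem_iInf, LinearMap.mem_ker] at hv ⊢
    simp only [Function.comp_apply, e, dotProductEquiv_apply_apply, dotProduct_comm _ v] at hv ⊢
    exact h v hv
  rw [Set.range_comp] at he
  exact (Submodule.apply_mem_span_image_iff_mem_span (f := e.toLinearMap) e.injective).1 he

section RelativeEntropy

variable {P P' Q R : Z → ℝ}

lemma sum_sub_sum_le_relEntZ (hP : ∀ z, 0 ≤ P z) (hQ : ∀ z, 0 < Q z) :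
    ∑ z, P z - ∑ z, Q z ≤ relEntZ P Q := by
  rw [← sum_sub_distrib]
  exact sum_le_sum fun z _ ↦ sub_le_mul_log_div (hP z) (hQ z)

lemma relEntZ_eq_relEntZ_add_dotProduct (hR : ∀ z, R z ≠ 0) (hQ : ∀ z, Q z ≠ 0) :
    relEntZ P Q = relEntZ P R + P ⬝ᵥ fun z ↦ log (R z / Q z) := by
  rw [relEntZ, relEntZ, dotProduct, ← sum_add_distrib]
  refine sum_congr rfl fun z _ ↦ ?_
  rcases eq_or_ne (P z) 0 with h | h
  · simp [h]
  · rw [log_div h (hQ z), log_div h (hR z), log_div (hR z) (hQ z)]; ring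

lemma relEntZ_convexComb_le (hP : ∀ z, 0 ≤ P z) (hP' : ∀ z, 0 ≤ P' z) (hQ : ∀ z, 0 < Q z)
    {t : ℝ} (ht₀ : 0 ≤ t) (ht₁ : t ≤ 1) :
    relEntZ ((1 - t) • P + t • P') Q
      ≤ (1 - t) * relEntZ P Q + t * relEntZ P' Q + t * log t * ∑ z with P z = 0, P' z := by
  have hterm : ∀ z, ((1 - t) • P + t • P') z * log (((1 - t) • P + t • P') z / Q z)
      ≤ (1 - t) * (P z * log (P z / Q z)) + t * (P' z * log (P' z / Q z))
        + if P z = 0 then t * log t * P' z else 0 := by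
    intro z
    simp only [Pi.add_apply, Pi.smul_apply, smul_eq_mul]
    split_ifs with hz
    · rw [hz, mul_zero, zero_add, mul_mul_log_mul_div t _ (hQ z).ne']
      simp
    · rw [add_zero]
      exact (convexOn_mul_log_div (hQ z).ne').2 (Set.mem_Ici.2 (hP z)) (Set.mem_Ici.2 (hP' z))
        (by linarith) ht₀ (by ring)
  calc relEntZ ((1 - t) • P + t • P') Q
      ≤ ∑ z, ((1 - t) * (P z * log (P z / Q z)) + t * (P' z * log (P' z / Q z))
          + if P z = 0 then t * log t * P' z else 0) := sum_le_sum fun z _ ↦ hterm z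
    _ = _ := by
      simp only [relEntZ, sum_add_distrib, mul_sum, sum_filter, mul_ite, mul_zero]

lemma pos_of_forall_relEntZ_le_convexComb (hP : ∀ z, 0 ≤ P z) (hP' : ∀ z, 0 < P' z)
    (hQ : ∀ z, 0 < Q z)
    (hmin : ∀ t ∈ Set.Ioo (0 : ℝ) 1, relEntZ P Q ≤ relEntZ ((1 - t) • P + t • P') Q) (z : Z) :
    0 < P z := by
  refine (hP z).lt_of_ne' fun hz ↦ ?_
  set A := ∑ z with P z = 0, P' z
  have hA : 0 < A := sum_pos (fun z _ ↦ hP' z) ⟨z, by simp [hz]⟩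
  set K := relEntZ P' Q - relEntZ P Q
  set t := exp (-(|K| + 1) / A)
  have hlog : log t * A = -(|K| + 1) := by rw [log_exp]; field_simp
  have ht : t ∈ Set.Ioo 0 1 :=
    ⟨exp_pos _, exp_lt_one_iff.2 (div_neg_of_neg_of_pos (neg_neg_of_pos (by positivity)) hA)⟩
  have hle := (hmin t ht).trans (relEntZ_convexComb_le hP (fun z ↦ (hP' z).le) hQ ht.1.le ht.2.le)
  have : t * (K + log t * A) < 0 :=
    mul_neg_of_pos_of_neg ht.1 (by rw [hlog]; linarith [le_abs_self K])
  nlinarith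

lemma hasDerivAt_relEntZ_add_smul (hP : ∀ z, P z ≠ 0) (hQ : ∀ z, Q z ≠ 0) (v : Z → ℝ) :
    HasDerivAt (fun t : ℝ ↦ relEntZ (P + t • v) Q) (v ⬝ᵥ fun z ↦ log (P z / Q z) + 1) 0 := by
  refine HasDerivAt.fun_sum fun z _ ↦ ?_
  have hline : HasDerivAt (fun t : ℝ ↦ P z + t * v z) (v z) 0 := by
    simpa using ((hasDerivAt_id (0 : ℝ)).mul_const (v z)).const_add (P z)
  rw [mul_comm]
  exact (hasDerivAt_mul_log_div (hP z) (hQ z)).comp_of_eq 0 hline (by simp)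

lemma eventually_nonneg_add_smul (hP : ∀ z, 0 < P z) (v : Z → ℝ) :
    ∀ᶠ t in nhds (0 : ℝ), ∀ z, 0 ≤ (P + t • v) z := by
  refine Filter.eventually_all.2 fun z ↦ ?_
  have hcont : Continuous fun t : ℝ ↦ (P + t • v) z := by fun_prop
  exact ((hcont.tendsto' 0 (P z) (by simp)).eventually_const_lt (hP z)).mono fun _ ↦ le_of_lt

lemma dotProduct_log_div_eq_zero_of_isLocalMin (hP : ∀ z, P z ≠ 0) (hQ : ∀ z, Q z ≠ 0)
    {v : Z → ℝ} (hv : ∑ z, v z = 0) (hmin : IsLocalMin (fun t : ℝ ↦ relEntZ (P + t • v) Q) 0) :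
    v ⬝ᵥ (fun z ↦ log (P z / Q z)) = 0 := by
  have h := hmin.hasDerivAt_eq_zero (hasDerivAt_relEntZ_add_smul hP hQ v)
  change v ⬝ᵥ ((fun z ↦ log (P z / Q z)) + 1) = 0 at h
  rwa [dotProduct_add, dotProduct_one, hv, add_zero] at h

end RelativeEntropy

section MixtureFamily

variable {ι : Type*} {f : ι → Z → ℝ} {c : ι → ℝ} {P P₀ Ps Q : Z → ℝ}

def mixtureFamily (f : ι → Z → ℝ) (c : ι → ℝ) : Set (Z → ℝ) :=
  {P | IsDistZ P ∧ ∀ i, P ⬝ᵥ f i = c i}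

lemma convex_mixtureFamily : Convex ℝ (mixtureFamily f c) := by
  rintro P ⟨⟨hP, hP1⟩, hPf⟩ P' ⟨⟨hP', hP'1⟩, hP'f⟩ a b ha hb hab
  refine ⟨⟨fun z ↦ ?_, ?_⟩, fun i ↦ ?_⟩
  · simp only [Pi.add_apply, Pi.smul_apply, smul_eq_mul]
    exact add_nonneg (mul_nonneg ha (hP z)) (mul_nonneg hb (hP' z))
  · simp only [Pi.add_apply, Pi.smul_apply, smul_eq_mul, sum_add_distrib, ← mul_sum, hP1, hP'1]
    simpa using hab
  · rw [add_dotProduct, smul_dotProduct, smul_dotProduct, hPf, hP'f, smul_eq_mul, smul_eq_mul,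
      ← add_mul, hab, one_mul]

lemma add_smul_mem_mixtureFamily (hP : P ∈ mixtureFamily f c) {v : Z → ℝ} (hv : ∑ z, v z = 0)
    (hvf : ∀ i, v ⬝ᵥ f i = 0) {t : ℝ} (ht : ∀ z, 0 ≤ (P + t • v) z) :
    P + t • v ∈ mixtureFamily f c := by
  refine ⟨⟨ht, ?_⟩, fun i ↦ ?_⟩
  · simp only [Pi.add_apply, Pi.smul_apply, smul_eq_mul, sum_add_distrib, ← mul_sum, hv, hP.1.2]
    ring
  · rw [add_dotProduct, smul_dotProduct, hvf, hP.2, smul_zero, add_zero]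

lemma pos_of_isMinOn_relEntZ (hQ : ∀ z, 0 < Q z) (hP₀ : P₀ ∈ mixtureFamily f c)
    (hP₀pos : ∀ z, 0 < P₀ z) (hPs : Ps ∈ mixtureFamily f c)
    (hmin : IsMinOn (relEntZ · Q) (mixtureFamily f c) Ps) (z : Z) : 0 < Ps z :=
  pos_of_forall_relEntZ_le_convexComb hPs.1.1 hP₀pos hQ (fun t ht ↦ isMinOn_iff.1 hmin _ <|
    convex_mixtureFamily hPs hP₀ (sub_nonneg.2 ht.2.le) ht.1.le (sub_add_cancel 1 t)) z

lemma dotProduct_log_div_eq_zero_of_isMinOn (hQ : ∀ z, 0 < Q z)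
    (hPs : Ps ∈ mixtureFamily f c) (hPspos : ∀ z, 0 < Ps z)
    (hmin : IsMinOn (relEntZ · Q) (mixtureFamily f c) Ps) {v : Z → ℝ} (hv : ∑ z, v z = 0)
    (hvf : ∀ i, v ⬝ᵥ f i = 0) : v ⬝ᵥ (fun z ↦ log (Ps z / Q z)) = 0 := by
  refine dotProduct_log_div_eq_zero_of_isLocalMin (fun z ↦ (hPspos z).ne') (fun z ↦ (hQ z).ne')
    hv ?_
  filter_upwards [eventually_nonneg_add_smul hPspos v] with t ht
  simpa only [zero_smul, add_zero] using
    isMinOn_iff.1 hmin _ (add_smul_mem_mixtureFamily hPs hv hvf ht)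

lemma relEntZ_eq_relEntZ_add_relEntZ_of_isMinOn (hQ : ∀ z, 0 < Q z)
    (hPs : Ps ∈ mixtureFamily f c) (hPspos : ∀ z, 0 < Ps z)
    (hmin : IsMinOn (relEntZ · Q) (mixtureFamily f c) Ps) (hP : P ∈ mixtureFamily f c) :
    relEntZ P Q = relEntZ P Ps + relEntZ Ps Q := by
  have h := dotProduct_log_div_eq_zero_of_isMinOn hQ hPs hPspos hmin (v := P - Ps)
    (by simp only [Pi.sub_apply, sum_sub_distrib, hP.1.2, hPs.1.2, sub_self])
    (fun i ↦ by rw [sub_dotProduct, hP.2, hPs.2, sub_self])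
  rw [sub_dotProduct, sub_eq_zero] at h
  rw [relEntZ_eq_relEntZ_add_dotProduct (fun z ↦ (hPspos z).ne') (fun z ↦ (hQ z).ne'), h]
  rfl

lemma exists_eq_mul_exp_of_isMinOn [Fintype ι] (hQ : ∀ z, 0 < Q z)
    (hPs : Ps ∈ mixtureFamily f c) (hPspos : ∀ z, 0 < Ps z)
    (hmin : IsMinOn (relEntZ · Q) (mixtureFamily f c) Ps) :
    ∃ θ : ι → ℝ, ∃ ψ : ℝ, ∀ z, Ps z = Q z * exp (∑ i, θ i * f i z - ψ) := by
  have hspan : (fun z ↦ log (Ps z / Q z))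
      ∈ Submodule.span ℝ (Set.range fun j : Option ι ↦ j.elim 1 f) :=
    mem_span_range_of_forall_dotProduct_eq_zero fun v hv ↦
      dotProduct_log_div_eq_zero_of_isMinOn hQ hPs hPspos hmin
        (by simpa [dotProduct_one] using hv none) (fun i ↦ hv (some i))
  obtain ⟨a, ha⟩ := (Submodule.mem_span_range_iff_exists_fun ℝ).1 hspan
  refine ⟨fun i ↦ a (some i), -a none, fun z ↦ ?_⟩
  have hz := congr_fun ha z
  simp only [Finset.sum_apply, Fintype.sum_option, Pi.smul_apply, smul_eq_mul, Option.elim_none,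
    Option.elim_some, Pi.one_apply, mul_one] at hz
  rw [sub_neg_eq_add, add_comm, hz, exp_log (div_pos (hPspos z) (hQ z)),
    mul_div_cancel₀ _ (hQ z).ne']

end MixtureFamily

theorem mixture_family_projection_general
    (Q : Z → ℝ) (hQpos : ∀ z, 0 < Q z)
    (k : ℕ) (f : Fin k → Z → ℝ) (c : Fin k → ℝ)
    (hfull : ∃ Pt : Z → ℝ,
      (IsDistZ Pt ∧ ∀ i : Fin k, ∑ z : Z, Pt z * f i z = c i) ∧ ∀ z, 0 < Pt z)
    (Ps : Z → ℝ)
    (hPsDist : IsDistZ Ps) (hPsM : ∀ i : Fin k, ∑ z : Z, Ps z * f i z = c i)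
    (hmin : relEntZ Ps Q
      = sInf { d : ℝ | ∃ Pt : Z → ℝ,
          (IsDistZ Pt ∧ ∀ i : Fin k, ∑ z : Z, Pt z * f i z = c i) ∧ d = relEntZ Pt Q }) :
    (∀ Pt : Z → ℝ, IsDistZ Pt → (∀ i : Fin k, ∑ z : Z, Pt z * f i z = c i) →
        relEntZ Pt Q = relEntZ Pt Ps + relEntZ Ps Q) ∧
    ∃ θ : Fin k → ℝ, ∃ ψ : ℝ,
      ∀ z : Z, Ps z = Q z * Real.exp ((∑ i : Fin k, θ i * f i z) - ψ) := by
  obtain ⟨P₀, hP₀, hP₀pos⟩ := hfull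
  have hPs : Ps ∈ mixtureFamily f c := ⟨hPsDist, hPsM⟩
  have hbdd : BddBelow {d | ∃ P ∈ mixtureFamily f c, d = relEntZ P Q} := by
    refine ⟨1 - ∑ z, Q z, ?_⟩
    rintro _ ⟨P, ⟨⟨hP, hP1⟩, -⟩, rfl⟩
    simpa only [hP1] using sum_sub_sum_le_relEntZ hP hQpos
  have hPsmin : IsMinOn (relEntZ · Q) (mixtureFamily f c) Ps :=
    isMinOn_iff.2 fun P hP ↦ hmin ▸ csInf_le hbdd ⟨P, hP, rfl⟩
  have hPspos := pos_of_isMinOn_relEntZ hQpos hP₀ hP₀pos hPs hPsmin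
  exact ⟨fun P hP hPf ↦ relEntZ_eq_relEntZ_add_relEntZ_of_isMinOn hQpos hPs hPspos hPsmin ⟨hP, hPf⟩,
    exists_eq_mul_exp_of_isMinOn hQpos hPs hPspos hPsmin⟩

/-- Pythagorean identity for I-projection onto a mixture family, and
membership of the projection in the associated exponential family. -/
theorem mixture_family_projection
    [Nonempty Z]
    (Q : Z → ℝ) (hQpos : ∀ z, 0 < Q z) (hQsum : ∑ z : Z, Q z = 1)
    (k : ℕ) (f : Fin k → Z → ℝ) (c : Fin k → ℝ)
    (hfull : ∃ Pt : Z → ℝ,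
      (IsDistZ Pt ∧ ∀ i : Fin k, ∑ z : Z, Pt z * f i z = c i) ∧ ∀ z, 0 < Pt z)
    (Ps : Z → ℝ)
    (hPsDist : IsDistZ Ps) (hPsM : ∀ i : Fin k, ∑ z : Z, Ps z * f i z = c i)
    (hmin : relEntZ Ps Q
      = sInf { d : ℝ | ∃ Pt : Z → ℝ,
          (IsDistZ Pt ∧ ∀ i : Fin k, ∑ z : Z, Pt z * f i z = c i) ∧ d = relEntZ Pt Q }) :
    (∀ Pt : Z → ℝ, IsDistZ Pt → (∀ i : Fin k, ∑ z : Z, Pt z * f i z = c i) →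
        relEntZ Pt Q = relEntZ Pt Ps + relEntZ Ps Q) ∧
    ∃ θ : Fin k → ℝ, ∃ ψ : ℝ,
      ∀ z : Z, Ps z = Q z * Real.exp ((∑ i : Fin k, θ i * f i z) - ψ) :=
  mixture_family_projection_general Q hQpos k f c hfull Ps hPsDist hPsM hmin
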